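/- arXiv:2412.20853 — 3 statements merged into one kernel-verified Lean document; each statement's English description precedes it below -/
import Mathlib

section
/- For the discrete distribution with atoms v_i = 2^{i-1} (1 ≤ i ≤ n-1), v_n = √n·2^{n-2} and weights w_i = (1/2)^i, w_n = (1/2)^{n-1}, setting the price at v_{n-1} yields welfare E[v·1[v ≥ v_{n-1}]] = 1/2 + √n/2 while the total expected welfare is E[v] = (n-1)/2 + √n/2; hence the welfare ratio E[v]/E[v·1[v ≥ v_{n-1}]] is Θ(√n). -/
/-! Each atom `i ≤ n - 1` contributes `vᵢwᵢ = 1/2` and the top atom `√n/2`, so the welfare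
ratio is `(n - 1 + √n) / (1 + √n)`, which lies between `√n/4` and `√n`. -/

open Finset

theorem two_pow_pred_mul_half_pow {i : ℕ} (hi : 1 ≤ i) :
    (2 : ℝ) ^ (i - 1) * (1 / 2) ^ i = 1 / 2 := by
  obtain ⟨k, rfl⟩ := Nat.exists_eq_add_of_le' hi
  rw [Nat.add_sub_cancel, pow_succ, ← mul_assoc, ← mul_pow, mul_one_div_cancel two_ne_zero,
    one_pow, one_mul]

theorem sqrt_div_four_le_welfare_ratio {x : ℝ} (hx : 1 ≤ x) :
    √x / 4 ≤ ((x - 1) / 2 + √x / 2) / (1 / 2 + √x / 2) := by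
  have hs : √x ^ 2 = x := Real.sq_sqrt (by linarith)
  rw [le_div_iff₀ (by positivity)]
  nlinarith [Real.sqrt_nonneg x]

theorem welfare_ratio_le_sqrt {x : ℝ} (hx : 0 ≤ x) :
    ((x - 1) / 2 + √x / 2) / (1 / 2 + √x / 2) ≤ √x := by
  have hs : √x ^ 2 = x := Real.sq_sqrt hx
  rw [div_le_iff₀ (by positivity)]
  nlinarith [Real.sqrt_nonneg x]

/-- For the discrete distribution with atoms `vᵢ = 2^(i-1)` (`i ≤ n-1`),
`vₙ = √n·2^(n-2)` and weights `wᵢ = (1/2)^i`, `wₙ = (1/2)^(n-1)` (`n ≥ 5`), setting the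
price at `v_{n-1}` yields welfare `E[v·1[v ≥ v_{n-1}]] = 1/2 + √n/2` while the total
welfare is `E[v] = (n-1)/2 + √n/2`; hence the welfare ratio is `Θ(√n)`
(it lies between `√n/4` and `√n`). -/
theorem stmt_13 (n : ℕ) (hn : 5 ≤ n) (v w : ℕ → ℝ)
    (hv : ∀ i, 1 ≤ i → i ≤ n - 1 → v i = 2 ^ (i - 1))
    (hvn : v n = Real.sqrt n * 2 ^ (n - 2))
    (hw : ∀ i, 1 ≤ i → i ≤ n - 1 → w i = (1 / 2 : ℝ) ^ i)
    (hwn : w n = (1 / 2 : ℝ) ^ (n - 1)) :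
    (∑ j ∈ Icc (n - 1) n, v j * w j = 1 / 2 + Real.sqrt n / 2) ∧
    (∑ j ∈ Icc 1 n, v j * w j = (n - 1) / 2 + Real.sqrt n / 2) ∧
    (Real.sqrt n / 4 ≤
        (∑ j ∈ Icc 1 n, v j * w j) / (∑ j ∈ Icc (n - 1) n, v j * w j) ∧
      (∑ j ∈ Icc 1 n, v j * w j) / (∑ j ∈ Icc (n - 1) n, v j * w j) ≤
        Real.sqrt n) := by
  obtain ⟨m, rfl⟩ : ∃ m, n = m + 1 := ⟨n - 1, by omega⟩
  simp only [Nat.add_sub_cancel] at hv hw hwn ⊢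
  have hterm : ∀ j ∈ Icc 1 m, v j * w j = 1 / 2 := fun j hj => by
    rw [mem_Icc] at hj
    rw [hv j hj.1 hj.2, hw j hj.1 hj.2, two_pow_pred_mul_half_pow hj.1]
  have hlast : v (m + 1) * w (m + 1) = √(m + 1 : ℕ) / 2 := by
    rw [hvn, hwn, show m + 1 - 2 = m - 1 by omega, mul_assoc,
      two_pow_pred_mul_half_pow (by omega), mul_one_div]
  have hprice : ∑ j ∈ Icc m (m + 1), v j * w j = 1 / 2 + √(m + 1 : ℕ) / 2 := by
    rw [sum_Icc_succ_top (by omega), Icc_self, sum_singleton,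
      hterm m (mem_Icc.2 ⟨by omega, le_rfl⟩), hlast]
  have htotal :
      ∑ j ∈ Icc 1 (m + 1), v j * w j = ((m + 1 : ℕ) - 1) / 2 + √(m + 1 : ℕ) / 2 := by
    rw [sum_Icc_succ_top (by omega), hlast, sum_congr rfl hterm, sum_const, Nat.card_Icc,
      nsmul_eq_mul]
    push_cast
    ring
  refine ⟨hprice, htotal, ?_, ?_⟩ <;> rw [hprice, htotal]
  · exact sqrt_div_four_le_welfare_ratio (by norm_cast; omega)
  · exact welfare_ratio_le_sqrt (Nat.cast_nonneg _)
end

section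
/- For the distribution F_{T,ε} with 0 < ε ≤ min(T,1), the welfare ratio E[v] / E[v·1[v ≥ T]] equals (log(T+1) - T/(T+1) + (2T+ε)/(2T+2)) / ((2T+ε)/(2T+2)), which is at least (1/2)·log(T+1) for T ≥ 3; in particular selling at the monopolistic price T loses a Θ(log T) fraction of welfare. -/
open Real Set

theorem hasDerivAt_log_add_one_sub_div {x : ℝ} (hx : 0 < x + 1) :
    HasDerivAt (fun z => log (z + 1) - z / (z + 1)) (x / (x + 1) ^ 2) x := by
  have hlog : HasDerivAt (fun z => log (z + 1)) (1 / (x + 1)) x := by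
    simpa using ((hasDerivAt_id x).add_const 1).log hx.ne'
  have hfrac : HasDerivAt (fun z => z / (z + 1)) ((1 * (x + 1) - x * 1) / (x + 1) ^ 2) x :=
    (hasDerivAt_id x).div ((hasDerivAt_id x).add_const 1) hx.ne'
  refine (hlog.sub hfrac).congr_deriv ?_
  field_simp
  ring

theorem integral_div_add_one_sq {T : ℝ} (hT : -1 < T) :
    ∫ z in (0:ℝ)..T, z / (z + 1) ^ 2 = log (T + 1) - T / (T + 1) := by
  have hpos : ∀ x ∈ uIcc 0 T, 0 < x + 1 := fun x hx => by
    rcases le_total 0 T with h | h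
    · rw [uIcc_of_le h] at hx; linarith [hx.1]
    · rw [uIcc_of_ge h] at hx; linarith [hx.1]
  rw [intervalIntegral.integral_eq_sub_of_hasDerivAt
    (fun x hx => hasDerivAt_log_add_one_sub_div (hpos x hx))
    (continuousOn_id.div (by fun_prop) fun x hx => (pow_pos (hpos x hx) 2).ne').intervalIntegrable]
  simp

theorem log_add_one_le_welfare_ratio {T ε : ℝ} (hT : 3 ≤ T) (hε : 0 < ε) (hε1 : ε ≤ 1) :
    log (T + 1) ≤ (log (T + 1) - T / (T + 1) + (2 * T + ε) / (2 * T + 2)) /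
      ((2 * T + ε) / (2 * T + 2)) := by
  set B := (2 * T + ε) / (2 * T + 2)
  have hB0 : 0 < B := div_pos (by linarith) (by linarith)
  have hB1 : B ≤ 1 := div_le_one_of_le₀ (by linarith) (by linarith)
  -- `exp 1 < 4 ≤ T + 1`
  have hlog : 1 ≤ log (T + 1) := by
    rw [le_log_iff_exp_le (by linarith)]
    linarith [exp_one_lt_d9]
  have hfrac : T / (T + 1) ≤ 1 := div_le_one_of_le₀ (by linarith) (by linarith)
  have hA : 0 ≤ log (T + 1) - T / (T + 1) := by linarith
  calc log (T + 1) ≤ 1 + (log (T + 1) - T / (T + 1)) := by linarith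
    _ ≤ 1 + (log (T + 1) - T / (T + 1)) / B := by gcongr; exact le_div_self hA hB0 hB1
    _ = _ := by rw [add_div, div_self hB0.ne', add_comm]

/-- For the distribution `F_{T,ε}` with `0 < ε ≤ min(T,1)` and density
`f z = 1/(z+1)²` on `[0,T]`, `f z = 1/(ε(T+1))` on `(T, T+ε]`: the welfare of selling
at the monopolistic price `T` is `∫_T^{T+ε} z f(z) dz = (2T+ε)/(2T+2)`, the total
welfare is `∫_0^T z/(z+1)² dz + (2T+ε)/(2T+2)` with
`∫_0^T z/(z+1)² dz = log(T+1) - T/(T+1)`, and for `T ≥ 3` the welfare ratio is at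
least `(1/2)·log(T+1)`, i.e. a `Θ(log T)` fraction of welfare is lost. -/
theorem stmt_18 (T ε : ℝ) (hε : 0 < ε) (hεT : ε ≤ T) (hε1 : ε ≤ 1) :
    (∫ z in (0:ℝ)..T, z / (z + 1) ^ 2) = Real.log (T + 1) - T / (T + 1) ∧
    (∫ z in T..(T + ε), z / (ε * (T + 1))) = (2 * T + ε) / (2 * T + 2) ∧
    (3 ≤ T →
      (Real.log (T + 1) - T / (T + 1) + (2 * T + ε) / (2 * T + 2)) /
          ((2 * T + ε) / (2 * T + 2)) ≥ 1 / 2 * Real.log (T + 1)) := by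
  have hT : 0 < T := hε.trans_le hεT
  refine ⟨integral_div_add_one_sq (by linarith), ?_, fun hT3 => ?_⟩
  · rw [intervalIntegral.integral_div, integral_id]
    field_simp
    ring
  · have hlog : 0 ≤ log (T + 1) := log_nonneg (by linarith)
    linarith [log_add_one_le_welfare_ratio hT3 hε hε1]
end

section
/- For the distribution F_{T,ε} with 0 < ε ≤ 1, the virtual value function φ_0(z) = z - (1-F(z))/f(z) equals -1 on [0,T] and 2z - (T+ε) on (T, T+ε], and is monotone non-decreasing on [0, T+ε]; hence F_{T,ε} is regular. -/
/-- For the distribution `F_{T,ε}` (with `0 ≤ T`, `0 < ε ≤ 1`) with density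
`f z = 1/(z+1)²` on `[0,T]` and `f z = 1/(ε(T+1))` on `(T, T+ε]`, the virtual value
`φ_0(z) = z - (1 - F z)/f z` equals `-1` on `[0,T]` and `2z - (T+ε)` on `(T, T+ε]`,
and is monotone non-decreasing on `[0, T+ε]`; hence `F_{T,ε}` is regular. -/
theorem stmt_19 (T ε : ℝ) (hT : 0 ≤ T) (hε : 0 < ε) (hε1 : ε ≤ 1)
    (F f : ℝ → ℝ)
    (hF : ∀ z, F z = if z ≤ T then 1 - 1 / (z + 1)
      else T / (T + 1) + (z - T) / (ε * (T + 1)))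
    (hf : ∀ z, f z = if z ≤ T then 1 / (z + 1) ^ 2 else 1 / (ε * (T + 1))) :
    (∀ z ∈ Set.Icc 0 T, z - (1 - F z) / f z = -1) ∧
    (∀ z ∈ Set.Ioc T (T + ε), z - (1 - F z) / f z = 2 * z - (T + ε)) ∧
    MonotoneOn (fun z => z - (1 - F z) / f z) (Set.Icc 0 (T + ε)) := by
  have hT1 : (0:ℝ) < T + 1 := by linarith
  have h1 : ∀ z ∈ Set.Icc 0 T, z - (1 - F z) / f z = -1 := by
    intro z hz
    rw [hF, hf, if_pos hz.2, if_pos hz.2]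
    have hz1 : (0:ℝ) < z + 1 := by linarith [hz.1]
    field_simp
    ring
  have h2 : ∀ z ∈ Set.Ioc T (T + ε), z - (1 - F z) / f z = 2 * z - (T + ε) := by
    intro z hz
    rw [hF, hf, if_neg (not_le.2 hz.1), if_neg (not_le.2 hz.1)]
    have : ε * (T + 1) ≠ 0 := by positivity
    field_simp
    ring
  refine ⟨h1, h2, ?_⟩
  intro x hx y hy hxy
  simp only
  by_cases hxT : x ≤ T
  · rw [h1 x ⟨hx.1, hxT⟩]
    by_cases hyT : y ≤ T
    · rw [h1 y ⟨hy.1, hyT⟩]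
    · rw [h2 y ⟨not_le.1 hyT, hy.2⟩]
      have := not_le.1 hyT
      linarith
  · have hx' : T < x := not_le.1 hxT
    rw [h2 x ⟨hx', hx.2⟩, h2 y ⟨lt_of_lt_of_le hx' hxy, hy.2⟩]
    linarith
end
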